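/- arXiv:math-ph/0212020 — 6 statements merged into one kernel-verified Lean document; each statement's English description precedes it below -/
import Mathlib

section
/- Let Cℓ(V,g) = Cℓ₀ ⊕ Cℓ₁ be a Z₂-grading preserving the multivector structure, and set Vᵢ = V ∩ Cℓᵢ. Then V = V₀ ⊕ V₁ and the subspaces V₀ and V₁ are orthogonal with respect to g: g(x,y) = 0 for all x ∈ V₀, y ∈ V₁. -/
/-!
Writing `1 = a₀ + a₁` and using `Cℓ₀ ⊓ Cℓ₁ = 0` forces `a₁ = 0`, so scalars are even. For
`x ∈ V₀` and `y ∈ V₁` the anticommutator `x y + y x = g(x, y) + g(y, x)` is then both a scalar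
and odd, hence zero. Since `2` is invertible, `Cℓ(V, g)` is isomorphic as a module to the
exterior algebra compatibly with `ι`, so `ι` is injective and `V₀ ∩ V₁ = 0`.
-/

open CliffordAlgebra

theorem one_mem_even_of_grading {R A : Type*} [Ring R] [Ring A] [Module R A]
    {A0 A1 : Submodule R A} (hsup : A0 ⊔ A1 = ⊤) (hdisj : Disjoint A0 A1)
    (h00 : ∀ a ∈ A0, ∀ b ∈ A0, a * b ∈ A0) (h01 : ∀ a ∈ A0, ∀ b ∈ A1, a * b ∈ A1)
    (h11 : ∀ a ∈ A1, ∀ b ∈ A1, a * b ∈ A0) : (1 : A) ∈ A0 := by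
  obtain ⟨a0, ha0, a1, ha1, hsum⟩ := Submodule.mem_sup.mp (hsup ▸ Submodule.mem_top (x := 1))
  have h01_zero : a0 * a1 = 0 := by
    have hodd : a0 * a1 ∈ A1 := h01 a0 ha0 a1 ha1
    have heven : a0 * a1 = a0 - a0 * a0 := by
      rw [eq_sub_iff_add_eq, ← mul_add, add_comm a1, hsum, mul_one]
    exact Submodule.disjoint_def.mp hdisj _ (heven ▸ sub_mem ha0 (h00 a0 ha0 a0 ha0)) hodd
  have ha1_sq : a1 * a1 = a1 := by
    rw [← zero_add (a1 * a1), ← h01_zero, ← add_mul, hsum, one_mul]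
  have ha1_zero : a1 = 0 :=
    Submodule.disjoint_def.mp hdisj _ (ha1_sq ▸ h11 a1 ha1 a1 ha1) ha1
  rwa [← hsum, ha1_zero, add_zero]

namespace CliffordAlgebra

theorem ι_injective {R M : Type*} [CommRing R] [AddCommGroup M] [Module R M]
    [Invertible (2 : R)] (Q : QuadraticForm R M) : Function.Injective (ι Q) := by
  intro x y h
  simpa only [equivExterior, changeFormEquiv, LinearEquiv.coe_mk, LinearMap.coe_mk,
    AddHom.coe_mk, changeForm_ι, ExteriorAlgebra.ι_inj] using congrArg (equivExterior Q) h

theorem polar_eq_zero_of_ι_mem {K M : Type*} [Field K] [Invertible (2 : K)]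
    [AddCommGroup M] [Module K M] {Q : QuadraticForm K M}
    {A0 A1 : Submodule K (CliffordAlgebra Q)}
    (hdisj : Disjoint A0 A1) (hone : 1 ∈ A0)
    (h01 : ∀ a ∈ A0, ∀ b ∈ A1, a * b ∈ A1) (h10 : ∀ a ∈ A1, ∀ b ∈ A0, a * b ∈ A1)
    {x y : M} (hx : ι Q x ∈ A0) (hy : ι Q y ∈ A1) : QuadraticMap.polar Q x y = 0 := by
  have hscalar : algebraMap K _ (QuadraticMap.polar Q x y) ∈ A0 := by
    rw [Algebra.algebraMap_eq_smul_one]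
    exact A0.smul_mem _ hone
  have hodd : algebraMap K _ (QuadraticMap.polar Q x y) ∈ A1 := by
    rw [← ι_mul_ι_add_swap]
    exact add_mem (h01 _ hx _ hy) (h10 _ hy _ hx)
  exact (map_eq_zero_iff _ (algebraMap K _).injective).mp
    (Submodule.disjoint_def.mp hdisj _ hscalar hodd)

end CliffordAlgebra

theorem LinearMap.BilinForm.IsSymm.polar_toQuadraticMap {R M : Type*} [CommRing R]
    [AddCommGroup M] [Module R M] {B : LinearMap.BilinForm R M} (hB : B.IsSymm) (x y : M) :
    QuadraticMap.polar B.toQuadraticMap x y = 2 * B x y := by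
  rw [LinearMap.BilinMap.polar_toQuadraticMap, hB.eq y x, two_mul]

theorem vector_space_decomposition_of_multivector_preserving_grading_general
    {V : Type*} [AddCommGroup V] [Module ℝ V]
    (B : LinearMap.BilinForm ℝ V) (hsymm : B.IsSymm)
    (A0 A1 : Submodule ℝ (CliffordAlgebra B.toQuadraticMap))
    (hsup : A0 ⊔ A1 = ⊤) (hdisj : A0 ⊓ A1 = ⊥)
    (h00 : ∀ a ∈ A0, ∀ b ∈ A0, a * b ∈ A0)
    (h01 : ∀ a ∈ A0, ∀ b ∈ A1, a * b ∈ A1)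
    (h10 : ∀ a ∈ A1, ∀ b ∈ A0, a * b ∈ A1)
    (h11 : ∀ a ∈ A1, ∀ b ∈ A1, a * b ∈ A0)
    -- the grading preserves the multivector structure: the projections of a
    -- 1-vector are again 1-vectors
    (hpres : ∀ v : V, ∃ v0 v1 : V, ι B.toQuadraticMap v0 ∈ A0 ∧
      ι B.toQuadraticMap v1 ∈ A1 ∧ v = v0 + v1) :
    (A0.comap (ι B.toQuadraticMap)) ⊔ (A1.comap (ι B.toQuadraticMap)) = ⊤ ∧
    (A0.comap (ι B.toQuadraticMap)) ⊓ (A1.comap (ι B.toQuadraticMap)) = ⊥ ∧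
    (∀ x y : V, ι B.toQuadraticMap x ∈ A0 → ι B.toQuadraticMap y ∈ A1 → B x y = 0) := by
  have hdisjoint : Disjoint A0 A1 := disjoint_iff.mpr hdisj
  refine ⟨?_, ?_, fun x y hx hy => ?_⟩
  · refine eq_top_iff.mpr fun v _ => ?_
    obtain ⟨v0, v1, h0, h1, rfl⟩ := hpres v
    exact Submodule.add_mem_sup h0 h1
  · rw [← Submodule.comap_inf, hdisj, Submodule.comap_bot,
      LinearMap.ker_eq_bot.mpr (ι_injective _)]
  · have hpolar := polar_eq_zero_of_ι_mem hdisjoint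
      (one_mem_even_of_grading hsup hdisjoint h00 h01 h11) h01 h10 hx hy
    rw [hsymm.polar_toQuadraticMap] at hpolar
    exact (mul_eq_zero.mp hpolar).resolve_left two_ne_zero

/-- For a Z₂-grading of `Cℓ(V,g)` preserving the multivector structure, with
`Vᵢ = V ∩ Cℓᵢ`, one has `V = V₀ ⊕ V₁` and `V₀ ⊥ V₁` with respect to `g`. -/
theorem vector_space_decomposition_of_multivector_preserving_grading
    {V : Type*} [AddCommGroup V] [Module ℝ V] [FiniteDimensional ℝ V]
    (B : LinearMap.BilinForm ℝ V) (hsymm : B.IsSymm) (hnd : B.Nondegenerate)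
    (A0 A1 : Submodule ℝ (CliffordAlgebra B.toQuadraticMap))
    (hsup : A0 ⊔ A1 = ⊤) (hdisj : A0 ⊓ A1 = ⊥)
    (h00 : ∀ a ∈ A0, ∀ b ∈ A0, a * b ∈ A0)
    (h01 : ∀ a ∈ A0, ∀ b ∈ A1, a * b ∈ A1)
    (h10 : ∀ a ∈ A1, ∀ b ∈ A0, a * b ∈ A1)
    (h11 : ∀ a ∈ A1, ∀ b ∈ A1, a * b ∈ A0)
    -- the grading preserves the multivector structure: the projections of a
    -- 1-vector are again 1-vectors
    (hpres : ∀ v : V, ∃ v0 v1 : V, ι B.toQuadraticMap v0 ∈ A0 ∧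
      ι B.toQuadraticMap v1 ∈ A1 ∧ v = v0 + v1) :
    (A0.comap (ι B.toQuadraticMap)) ⊔ (A1.comap (ι B.toQuadraticMap)) = ⊤ ∧
    (A0.comap (ι B.toQuadraticMap)) ⊓ (A1.comap (ι B.toQuadraticMap)) = ⊥ ∧
    (∀ x y : V, ι B.toQuadraticMap x ∈ A0 → ι B.toQuadraticMap y ∈ A1 → B x y = 0) :=
  vector_space_decomposition_of_multivector_preserving_grading_general B hsymm A0 A1 hsup hdisj h00
    h01 h10 h11 hpres
end

section
/- Let α be an involutive orthogonal linear map on (V,g) with +1 eigenspace V₀ and −1 eigenspace V₁. The map Γ_α : V → End(Λ(V)) given by Γ_α(v) = (v ∧ ·) + (α(v) ⌟ ·) satisfies (Γ_α(v))² = g_α(v,v)·id, where g_α(u,v) = g(u₀,v₀) − g(u₁,v₁) with uᵢ, vᵢ the projections onto Vᵢ. Hence Γ_α is a Clifford map for (V, g_α). -/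
/-!
On `Λ(V)`, left multiplication by `v` and contraction by the covector `g(α v, ·)` both square to
zero, and they anticommute up to the scalar `g(α v, v)`; so `Γ_α(v)² = g(α v, v)`. For symmetric
`g` the cross terms of `g(v₀,v₀) - g(v₁,v₁)` are all that survive, and they add up to the same
scalar `g(α v, v)`.
-/

open CliffordAlgebra

theorem LinearMap.BilinForm.IsSymm.apply_half_add_sub_apply_half_sub {K M : Type*} [Field K]
    [NeZero (2 : K)] [AddCommGroup M] [Module K M] {B : LinearMap.BilinForm K M}
    (hB : B.IsSymm) (v w : M) :
    B ((1 / 2 : K) • (v + w)) ((1 / 2 : K) • (v + w))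
      - B ((1 / 2 : K) • (v - w)) ((1 / 2 : K) • (v - w)) = B w v := by
  simp only [map_smul, LinearMap.smul_apply, map_add, map_sub, LinearMap.add_apply,
    LinearMap.sub_apply, smul_eq_mul, hB.eq v w]
  field_simp
  ring

theorem CliffordAlgebra.mulLeft_ι_add_contractLeft_apply_apply {R M : Type*} [CommRing R]
    [AddCommGroup M] [Module R M] (Q : QuadraticForm R M) (d : Module.Dual R M) (v : M)
    (x : CliffordAlgebra Q) :
    let Γ : CliffordAlgebra Q →ₗ[R] CliffordAlgebra Q :=
      LinearMap.mulLeft R (ι Q v) + contractLeft d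
    Γ (Γ x) = (Q v + d v) • x := by
  simp only [LinearMap.add_apply, LinearMap.mulLeft_apply, map_add, contractLeft_ι_mul,
    ← mul_assoc, ι_sq_scalar, contractLeft_contractLeft, ← Algebra.smul_def, add_smul]
  abel

theorem deformed_clifford_map_squares_to_deformed_metric_general
    {V : Type*} [AddCommGroup V] [Module ℝ V]
    (B : LinearMap.BilinForm ℝ V) (hsymm : B.IsSymm)
    (α : V →ₗ[ℝ] V) (v : V)
    (Γv : CliffordAlgebra (0 : QuadraticForm ℝ V) →ₗ[ℝ]
      CliffordAlgebra (0 : QuadraticForm ℝ V))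
    (hΓv : Γv = LinearMap.mulLeft ℝ (ι (0 : QuadraticForm ℝ V) v)
      + contractLeft (Q := (0 : QuadraticForm ℝ V)) (B (α v))) :
    ∀ x : CliffordAlgebra (0 : QuadraticForm ℝ V),
      Γv (Γv x)
      = (B ((1 / 2 : ℝ) • (v + α v)) ((1 / 2 : ℝ) • (v + α v))
          - B ((1 / 2 : ℝ) • (v - α v)) ((1 / 2 : ℝ) • (v - α v))) • x := by
  intro x
  rw [hsymm.apply_half_add_sub_apply_half_sub, hΓv, mulLeft_ι_add_contractLeft_apply_apply,
    zero_apply, zero_add]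

/-- Let `α` be an involutive `g`-orthogonal linear map on `V`, with `±1`-eigenspace
projections `v ↦ vᵢ`.  The map `Γ_α(v) = (v ∧ ·) + (α(v) ⌟ ·)` on the exterior
algebra `Λ(V)` (realized as the Clifford algebra of the zero form, whose product is
the exterior product, with `⌟` the contraction by the covector `g(α(v), ·)`)
satisfies `(Γ_α(v))² = g_α(v,v) • id`, where `g_α(u,v) = g(u₀,v₀) - g(u₁,v₁)`.
Hence `Γ_α` is a Clifford map for `(V, g_α)`. -/
theorem deformed_clifford_map_squares_to_deformed_metric
    {V : Type*} [AddCommGroup V] [Module ℝ V] [FiniteDimensional ℝ V]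
    (B : LinearMap.BilinForm ℝ V) (hsymm : B.IsSymm) (hnd : B.Nondegenerate)
    (α : V →ₗ[ℝ] V) (hinv : ∀ v, α (α v) = v)
    (hiso : ∀ x y : V, B (α x) (α y) = B x y) (v : V)
    (Γv : CliffordAlgebra (0 : QuadraticForm ℝ V) →ₗ[ℝ]
      CliffordAlgebra (0 : QuadraticForm ℝ V))
    (hΓv : Γv = LinearMap.mulLeft ℝ (ι (0 : QuadraticForm ℝ V) v)
      + contractLeft (Q := (0 : QuadraticForm ℝ V)) (B (α v))) :
    ∀ x : CliffordAlgebra (0 : QuadraticForm ℝ V),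
      Γv (Γv x)
      = (B ((1 / 2 : ℝ) • (v + α v)) ((1 / 2 : ℝ) • (v + α v))
          - B ((1 / 2 : ℝ) • (v - α v)) ((1 / 2 : ℝ) • (v - α v))) • x :=
  deformed_clifford_map_squares_to_deformed_metric_general B hsymm α v Γv hΓv
end

section
/- For v ∈ V and a a k-vector in Λᵏ(V), the deformed Clifford product satisfies v ∨_α a = v₀ a + â v₁, where juxtaposition denotes the original Clifford product of Cℓ(V,g), v₀, v₁ are the α-even and α-odd parts of v, and â = (−1)ᵏ a is the parity involution applied to a. -/
open CliffordAlgebra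

section auxcontract

variable {V : Type*} [AddCommGroup V] [Module ℝ V]

lemma aux_contract_zero (f : Module.Dual ℝ V) {x : ExteriorAlgebra ℝ V}
    (hx : x ∈ (LinearMap.range (ExteriorAlgebra.ι ℝ : V →ₗ[ℝ] ExteriorAlgebra ℝ V)) ^ 0) :
    contractLeft (Q := (0 : QuadraticForm ℝ V)) f x = 0 := by
  rw [pow_zero] at hx
  obtain ⟨r, rfl⟩ := Submodule.mem_one.mp hx
  exact contractLeft_algebraMap _ _ _

lemma aux_contract_mem (f : Module.Dual ℝ V) {n : ℕ} {x : ExteriorAlgebra ℝ V}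
    (hx : x ∈ (LinearMap.range (ExteriorAlgebra.ι ℝ : V →ₗ[ℝ] ExteriorAlgebra ℝ V)) ^ n) :
    contractLeft (Q := (0 : QuadraticForm ℝ V)) f x ∈
      (LinearMap.range (ExteriorAlgebra.ι ℝ : V →ₗ[ℝ] ExteriorAlgebra ℝ V)) ^ (n - 1) := by
  induction hx using Submodule.pow_induction_on_left' with
  | algebraMap r =>
      rw [contractLeft_algebraMap]
      exact Submodule.zero_mem _
  | add x y i hx hy ihx ihy =>
      rw [map_add]
      exact Submodule.add_mem _ ihx ihy
  | mem_mul m hm i x hx ihx =>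
      obtain ⟨u, rfl⟩ := hm
      rw [contractLeft_ι_mul]
      simp only [Nat.succ_sub_one]
      refine Submodule.sub_mem _ (Submodule.smul_mem _ _ hx) ?_
      rcases i with _ | j
      · rw [aux_contract_zero f hx, mul_zero]
        exact Submodule.zero_mem _
      · rw [pow_succ']
        simpa using Submodule.mul_mem_mul (LinearMap.mem_range_self _ u) ihx

end auxcontract

set_option maxHeartbeats 1000000 in
lemma aux_right_mul {V : Type*} [AddCommGroup V] [Module ℝ V]
    (B : LinearMap.BilinForm ℝ V) (hsymm : B.IsSymm)
    (F : CliffordAlgebra B.toQuadraticMap ≃ₗ[ℝ] ExteriorAlgebra ℝ V)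
    (hF1 : F 1 = 1)
    (hF : ∀ (w : V) (x : CliffordAlgebra B.toQuadraticMap),
      F (ι B.toQuadraticMap w * x) =
        ExteriorAlgebra.ι ℝ w * F x + contractLeft (Q := 0) (B w) (F x)) :
    ∀ (k : ℕ) (w : V) (a : CliffordAlgebra B.toQuadraticMap),
      F a ∈ (LinearMap.range (ExteriorAlgebra.ι ℝ : V →ₗ[ℝ] ExteriorAlgebra ℝ V)) ^ k →
      F (a * ι B.toQuadraticMap w) =
        ((-1 : ℝ)) ^ k • (ExteriorAlgebra.ι ℝ w * F a)
          - ((-1 : ℝ)) ^ k • contractLeft (Q := 0) (B w) (F a) := by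
  intro k
  induction k using Nat.strong_induction_on with
  | _ k IH => ?_
  match k with
  | 0 =>
      intro w a ha
      rw [pow_zero] at ha
      obtain ⟨r, hr⟩ := Submodule.mem_one.mp ha
      have ha' : a = r • 1 := by
        apply F.injective
        rw [map_smul, hF1, ← Algebra.algebraMap_eq_smul_one, hr]
      subst ha'
      have h1 : (r • (1 : CliffordAlgebra B.toQuadraticMap)) * ι B.toQuadraticMap w
          = r • (ι B.toQuadraticMap w * 1) := by
        rw [smul_mul_assoc, one_mul, mul_one]
      rw [h1, map_smul, hF w 1, hF1, contractLeft_one, mul_one, add_zero]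
      simp only [pow_zero, one_smul, map_smul, hF1]
      rw [mul_smul_comm, mul_one, contractLeft_one, smul_zero, sub_zero]
  | (n + 1) =>
      intro w a ha
      rw [pow_succ'] at ha
      have key : ∀ b ∈ (LinearMap.range (ExteriorAlgebra.ι ℝ : V →ₗ[ℝ] ExteriorAlgebra ℝ V)) *
          (LinearMap.range (ExteriorAlgebra.ι ℝ : V →ₗ[ℝ] ExteriorAlgebra ℝ V)) ^ n,
          F (F.symm b * ι B.toQuadraticMap w) =
            ((-1 : ℝ)) ^ (n + 1) • (ExteriorAlgebra.ι ℝ w * b)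
              - ((-1 : ℝ)) ^ (n + 1) • contractLeft (Q := 0) (B w) b := by
        intro b hb
        induction hb using Submodule.mul_induction_on' with
        | mem_mul_mem m hm y hy =>
            obtain ⟨u, rfl⟩ := hm
            set aY := F.symm y with haY
            set c := contractLeft (Q := (0 : QuadraticForm ℝ V)) (B u) y with hc
            set aZ := F.symm c with haZ
            have hy' : F aY = y := F.apply_symm_apply y
            have hz' : F aZ = c := F.apply_symm_apply c
            have hFm : F.symm (ExteriorAlgebra.ι ℝ u * y) = ι B.toQuadraticMap u * aY - aZ := by
              apply F.injective
              rw [F.apply_symm_apply, map_sub, hF u aY, hy', hz']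
              abel
            have hY : F (aY * ι B.toQuadraticMap w) =
                ((-1 : ℝ)) ^ n • (ExteriorAlgebra.ι ℝ w * y)
                  - ((-1 : ℝ)) ^ n • contractLeft (Q := 0) (B w) y := by
              have := IH n (Nat.lt_succ_self n) w aY (by rw [hy']; exact hy)
              rwa [hy'] at this
            have hcmem : c ∈
                (LinearMap.range (ExteriorAlgebra.ι ℝ : V →ₗ[ℝ] ExteriorAlgebra ℝ V)) ^ (n - 1) :=
              aux_contract_mem (B u) hy
            have hZ : F (aZ * ι B.toQuadraticMap w) =
                ((-1 : ℝ)) ^ (n - 1) • (ExteriorAlgebra.ι ℝ w * c)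
                  - ((-1 : ℝ)) ^ (n - 1) • contractLeft (Q := 0) (B w) c := by
              have := IH (n - 1) (by omega) w aZ (by rw [hz']; exact hcmem)
              rwa [hz'] at this
            rw [hFm, sub_mul, map_sub, mul_assoc, hF u (aY * ι B.toQuadraticMap w), hY, hZ]
            -- now a pure exterior algebra computation
            have huw : ExteriorAlgebra.ι ℝ w * (ExteriorAlgebra.ι ℝ u * y)
                = -(ExteriorAlgebra.ι ℝ u * (ExteriorAlgebra.ι ℝ w * y)) := by
              rw [← mul_assoc, ← mul_assoc,
                eq_neg_of_add_eq_zero_left (ExteriorAlgebra.ι_add_mul_swap w u), neg_mul]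
            have hBuw : contractLeft (Q := (0 : QuadraticForm ℝ V)) (B u)
                (ExteriorAlgebra.ι ℝ w * y)
                = (B u) w • y - ExteriorAlgebra.ι ℝ w * c := by
              rw [hc]; exact contractLeft_ι_mul _ _ _
            have hBuBw : contractLeft (Q := (0 : QuadraticForm ℝ V)) (B u)
                (contractLeft (Q := (0 : QuadraticForm ℝ V)) (B w) y)
                = -(contractLeft (Q := (0 : QuadraticForm ℝ V)) (B w) c) := by
              rw [hc]; exact contractLeft_comm _ _ _
            have hBwu : contractLeft (Q := (0 : QuadraticForm ℝ V)) (B w)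
                (ExteriorAlgebra.ι ℝ u * y)
                = (B w) u • y - ExteriorAlgebra.ι ℝ u
                    * (contractLeft (Q := (0 : QuadraticForm ℝ V)) (B w) y) :=
              contractLeft_ι_mul _ _ _
            simp only [smul_sub, mul_sub, mul_smul_comm, map_sub, map_smul]
            rw [hBuw, huw, hBwu, hBuBw, hsymm.eq w u]
            simp only [smul_sub, smul_neg, sub_neg_eq_add, smul_smul]
            rcases n with _ | m
            · have hc0 : c = 0 := by rw [hc]; exact aux_contract_zero _ hy
              rw [hc0]
              simp only [mul_zero, map_zero, smul_zero, sub_zero, zero_sub, neg_zero, add_zero]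
              module
            · have hs : ((-1 : ℝ)) ^ (m + 1 - 1) = (-1 : ℝ) ^ m := by norm_num
              rw [hs]
              have h1 : ((-1 : ℝ)) ^ (m + 1) = -((-1 : ℝ)) ^ m := by rw [pow_succ]; ring
              have h2 : ((-1 : ℝ)) ^ (m + 1 + 1) = ((-1 : ℝ)) ^ m := by rw [pow_succ, pow_succ]; ring
              rw [h1, h2]
              module
        | add x y hx hy ihx ihy =>
            rw [map_add, map_add, add_mul, map_add, ihx, ihy]
            simp only [mul_add, map_add, smul_add]
            abel
      have := key (F a) ha
      rwa [F.symm_apply_apply] at this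

/-- For `v ∈ V` and a `k`-vector `a ∈ Λᵏ(V)`, the deformed Clifford product
`v ∨_α a = v ∧ a + α(v) ⌟ a` (computed in the exterior algebra, to which `Cℓ(V,g)`
is identified via a Chevalley linear isomorphism `F`) satisfies
`v ∨_α a = v₀ a + â v₁`, where juxtaposition is the original Clifford product,
`v₀, v₁` are the α-even and α-odd parts of `v`, and `â = (-1)ᵏ a`. -/
theorem deformed_product_in_terms_of_original_clifford_product
    {V : Type*} [AddCommGroup V] [Module ℝ V] [FiniteDimensional ℝ V]
    (B : LinearMap.BilinForm ℝ V) (hsymm : B.IsSymm) (hnd : B.Nondegenerate)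
    (α : V →ₗ[ℝ] V) (hinv : ∀ v, α (α v) = v)
    (hiso : ∀ x y : V, B (α x) (α y) = B x y)
    -- `F` is the Chevalley identification of `Cℓ(V,g)` with `Λ(V)`:
    (F : CliffordAlgebra B.toQuadraticMap ≃ₗ[ℝ] ExteriorAlgebra ℝ V)
    (hF1 : F 1 = 1)
    (hF : ∀ (w : V) (x : CliffordAlgebra B.toQuadraticMap),
      F (ι B.toQuadraticMap w * x) =
        ExteriorAlgebra.ι ℝ w * F x + contractLeft (Q := 0) (B w) (F x))
    (v : V) (k : ℕ) (a : CliffordAlgebra B.toQuadraticMap)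
    (ha : F a ∈ (LinearMap.range (ExteriorAlgebra.ι ℝ : V →ₗ[ℝ] ExteriorAlgebra ℝ V)) ^ k) :
    ExteriorAlgebra.ι ℝ v * F a + contractLeft (Q := 0) (B (α v)) (F a) =
      F (ι B.toQuadraticMap ((1 / 2 : ℝ) • (v + α v)) * a
        + ((-1 : ℝ)) ^ k • (a * ι B.toQuadraticMap ((1 / 2 : ℝ) • (v - α v)))) := by
  set w₀ := (1 / 2 : ℝ) • (v + α v) with hw₀
  set w₁ := (1 / 2 : ℝ) • (v - α v) with hw₁
  have h0 : w₀ + w₁ = v := by rw [hw₀, hw₁]; module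
  have h1 : w₀ - w₁ = α v := by rw [hw₀, hw₁]; module
  have hsq : ((-1 : ℝ)) ^ k * ((-1 : ℝ)) ^ k = 1 := by
    rw [← pow_add]; exact Even.neg_one_pow ⟨k, rfl⟩
  rw [map_add,
    show F (((-1 : ℝ)) ^ k • (a * ι B.toQuadraticMap w₁))
        = ((-1 : ℝ)) ^ k • F (a * ι B.toQuadraticMap w₁) from map_smul F _ _,
    hF w₀ a, aux_right_mul B hsymm F hF1 hF k w₁ a ha, ← h1, ← h0]
  simp only [map_add, map_sub, add_mul, smul_sub, smul_smul, hsq, one_smul,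
    LinearMap.sub_apply, LinearMap.add_apply]
  abel
end

section
/- The Clifford algebra Cℓ(V, g_α) of the deformed metric g_α(u,v) = g(u₀,v₀) − g(u₁,v₁) is isomorphic as a real algebra to the algebra (Λ(V), ∨_α), where ∨_α is the product generated by v ∨_α a = v ∧ a + α(v) ⌟ a. In particular, for V = ℝ^{p,q} with V₁ spanned by |r−p| basis vectors, this realizes Cℓ_{r,s} on the underlying vector space of Cℓ_{p,q}. -/
open CliffordAlgebra

/-- The Clifford algebra `Cℓ(V, g_α)` of the deformed metric
`g_α(u,v) = g(u₀,v₀) - g(u₁,v₁)` is isomorphic, as a real algebra, to the exterior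
algebra `Λ(V)` endowed with the product `∨_α` generated by
`v ∨_α a = v ∧ a + α(v) ⌟ a`: there is a linear equivalence
`F : Cℓ(V,g_α) ≃ Λ(V)` sending `1` to `1` and intertwining Clifford
multiplication by `v` with `∨_α`-multiplication by `v`. -/
theorem clifford_algebra_of_deformed_metric_is_exterior_algebra_with_deformed_product
    {V : Type*} [AddCommGroup V] [Module ℝ V] [FiniteDimensional ℝ V]
    (B : LinearMap.BilinForm ℝ V) (hsymm : B.IsSymm) (hnd : B.Nondegenerate)
    (α : V →ₗ[ℝ] V) (hinv : ∀ v, α (α v) = v)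
    (hiso : ∀ x y : V, B (α x) (α y) = B x y)
    (Bα : LinearMap.BilinForm ℝ V)
    (hBα : ∀ u v : V, Bα u v =
      B ((1 / 2 : ℝ) • (u + α u)) ((1 / 2 : ℝ) • (v + α v))
        - B ((1 / 2 : ℝ) • (u - α u)) ((1 / 2 : ℝ) • (v - α v))) :
    ∃ F : CliffordAlgebra Bα.toQuadraticMap ≃ₗ[ℝ] ExteriorAlgebra ℝ V,
      F 1 = 1 ∧
      ∀ (v : V) (x : CliffordAlgebra Bα.toQuadraticMap),
        F (ι Bα.toQuadraticMap v * x) =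
          ExteriorAlgebra.ι ℝ v * F x
            + contractLeft (Q := (0 : QuadraticForm ℝ V)) (B (α v)) (F x) := by
  have hBα' : ∀ u v : V, Bα u v = B (α u) v := by
    intro u v
    have h1 : B u (α v) = B (α u) v := by
      have := hiso u (α v); rw [hinv] at this; linarith [this]
    rw [hBα u v]
    simp only [map_smul, LinearMap.smul_apply, map_add, map_sub, LinearMap.add_apply,
      LinearMap.sub_apply, smul_eq_mul]
    ring_nf
    rw [h1]
    ring
  have hB : Bα = B.compl₁₂ α LinearMap.id := by
    ext u v; simpa using hBα' u v
  have hproof : (-Bα).toQuadraticMap = (0 : QuadraticForm ℝ V) - Bα.toQuadraticMap := by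
    ext v; simp [LinearMap.BilinMap.toQuadraticMap_apply]
  refine ⟨changeFormEquiv hproof, ?_, ?_⟩
  · exact changeForm_one hproof
  · intro v x
    have := changeForm_ι_mul hproof v x
    rw [show (changeFormEquiv hproof : CliffordAlgebra Bα.toQuadraticMap →
        ExteriorAlgebra ℝ V) = changeForm hproof from rfl] at *
    rw [this]
    have hbv : (-Bα) v = -(B (α v)) := by
      ext w; simp [hBα' v w]
    rw [hbv, map_neg]
    simp only [LinearMap.neg_apply]
    rw [sub_neg_eq_add]
end

section
/- Let {e₁,…,eₙ} be a g-orthonormal basis of V adapted to the decomposition V = V₀ ⊕ V₁ (eigenspaces of the grading automorphism α restricted to V). Then the even part Cℓ₀ is generated as an algebra by the elements eᵢ with eᵢ ∈ V₀ together with the products eᵢeⱼ with eᵢ, eⱼ ∈ V₁. -/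
/-!
The vectors `ι eᵢ` generate the Clifford algebra. Let `P` be the subalgebra generated by the
proposed generators and `O` the span of the products `ι eⱼ * p` with `eⱼ` odd and `p ∈ P`.
Left multiplication by any `ι eᵢ` maps `P + O` into itself: an even `eᵢ` anticommutes past an
odd `eⱼ` (or squares to a scalar), and an odd `eᵢ` pairs with `eⱼ` into a generator of `P`.
Hence `P + O` is the whole algebra. As `P ⊆ Cℓ₀` and `O ⊆ Cℓ₁`, the modular law gives `P = Cℓ₀`.
-/

open CliffordAlgebra

theorem Submodule.one_mem_of_mul_mem_of_sup_eq_top_of_disjoint {R A : Type*} [Ring R] [Ring A]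
    [Module R A] {A0 A1 : Submodule R A}
    (hsup : A0 ⊔ A1 = ⊤) (hdisj : Disjoint A0 A1)
    (h00 : ∀ a ∈ A0, ∀ b ∈ A0, a * b ∈ A0) (h01 : ∀ a ∈ A0, ∀ b ∈ A1, a * b ∈ A1)
    (h10 : ∀ a ∈ A1, ∀ b ∈ A0, a * b ∈ A1) (h11 : ∀ a ∈ A1, ∀ b ∈ A1, a * b ∈ A0) :
    (1 : A) ∈ A0 := by
  obtain ⟨a, ha, b, hb, hab⟩ := Submodule.mem_sup.mp (hsup ▸ Submodule.mem_top (x := (1 : A)))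
  have hab0 : a * b = 0 := by
    have : a * b = a - a * a := by rw [eq_sub_iff_add_eq', ← mul_add, hab, mul_one]
    exact Submodule.disjoint_def.mp hdisj _
      (this ▸ A0.sub_mem ha (h00 a ha a ha)) (h01 a ha b hb)
  have hbb0 : b * b = 0 := by
    have : b * b = b - b * a := by rw [eq_sub_iff_add_eq, ← mul_add, add_comm, hab, mul_one]
    exact Submodule.disjoint_def.mp hdisj _
      (h11 b hb b hb) (this ▸ A1.sub_mem hb (h10 b hb a ha))
  have hb0 : b = 0 := by rw [← one_mul b, ← hab, add_mul, hab0, hbb0, add_zero]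
  rwa [← hab, hb0, add_zero]

theorem Submodule.eq_top_of_one_mem_of_mul_mem {R A : Type*} [CommSemiring R] [Semiring A]
    [Algebra R A] {s : Set A} (hs : Algebra.adjoin R s = ⊤) {T : Submodule R A} (h1 : 1 ∈ T)
    (hmul : ∀ a ∈ s, ∀ y ∈ T, a * y ∈ T) : T = ⊤ := by
  have hstable : ∀ x ∈ Algebra.adjoin R s, ∀ y ∈ T, x * y ∈ T := by
    intro x hx
    induction hx using Algebra.adjoin_induction with
    | mem a ha => exact hmul a ha
    | algebraMap r =>
      intro y hy
      rw [Algebra.algebraMap_eq_smul_one, smul_one_mul]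
      exact T.smul_mem r hy
    | add x z _ _ hx hz =>
      intro y hy
      rw [add_mul]
      exact T.add_mem (hx y hy) (hz y hy)
    | mul x z _ _ hx hz =>
      intro y hy
      rw [mul_assoc]
      exact hx _ (hz y hy)
  refine eq_top_iff.mpr fun x _ => ?_
  simpa using hstable x (hs ▸ Algebra.mem_top) 1 h1

namespace CliffordAlgebra

variable {R M I : Type*} [CommRing R] [AddCommGroup M] [Module R M] {Q : QuadraticForm R M}

theorem adjoin_range_ι_comp_eq_top {e : I → M} (hspan : Submodule.span R (Set.range e) = ⊤) :
    Algebra.adjoin R (Set.range (ι Q ∘ e)) = ⊤ := by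
  rw [← adjoin_range_ι, ← Algebra.adjoin_span, Set.range_comp, ← Submodule.map_span, hspan,
    Submodule.map_top, LinearMap.coe_range]

variable (Q) (e : I → M) (ev od : I → Prop)

def evenProducts : Subalgebra R (CliffordAlgebra Q) :=
  Algebra.adjoin R ({x | ∃ i, ev i ∧ x = ι Q (e i)} ∪
    {x | ∃ i j, od i ∧ od j ∧ x = ι Q (e i) * ι Q (e j)})

def oddProducts : Submodule R (CliffordAlgebra Q) :=
  Submodule.span R {x | ∃ i, od i ∧ ∃ p ∈ evenProducts Q e ev od, x = ι Q (e i) * p}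

variable {Q e ev od}

theorem ι_mem_evenProducts {i : I} (hi : ev i) : ι Q (e i) ∈ evenProducts Q e ev od :=
  Algebra.subset_adjoin (Or.inl ⟨i, hi, rfl⟩)

theorem ι_mul_ι_mem_evenProducts {i j : I} (hi : od i) (hj : od j) :
    ι Q (e i) * ι Q (e j) ∈ evenProducts Q e ev od :=
  Algebra.subset_adjoin (Or.inr ⟨i, j, hi, hj, rfl⟩)

theorem ι_mul_mem_oddProducts {i : I} (hi : od i) {p : CliffordAlgebra Q}
    (hp : p ∈ evenProducts Q e ev od) : ι Q (e i) * p ∈ oddProducts Q e ev od :=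
  Submodule.subset_span ⟨i, hi, p, hp, rfl⟩

theorem ι_mul_mem_sup_of_mem_oddProducts (hortho : Pairwise fun i j => Q.IsOrtho (e i) (e j))
    (hcover : ∀ i, ev i ∨ od i) (i : I) {y : CliffordAlgebra Q}
    (hy : y ∈ oddProducts Q e ev od) :
    ι Q (e i) * y ∈ Subalgebra.toSubmodule (evenProducts Q e ev od) ⊔ oddProducts Q e ev od := by
  induction hy using Submodule.span_induction with
  | mem x hx =>
    obtain ⟨j, hj, p, hp, rfl⟩ := hx
    rcases hcover i with hi | hi
    · by_cases hij : i = j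
      · subst hij
        rw [← mul_assoc, ι_sq_scalar, Algebra.algebraMap_eq_smul_one, smul_one_mul]
        exact Submodule.mem_sup_left ((evenProducts Q e ev od).smul_mem hp _)
      · rw [ι_mul_ι_mul_of_isOrtho _ (hortho hij)]
        exact Submodule.mem_sup_right (Submodule.neg_mem _
          (ι_mul_mem_oddProducts hj
            ((evenProducts Q e ev od).mul_mem (ι_mem_evenProducts hi) hp)))
    · rw [← mul_assoc]
      exact Submodule.mem_sup_left
        ((evenProducts Q e ev od).mul_mem (ι_mul_ι_mem_evenProducts hi hj) hp)
  | zero => simp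
  | add x z _ _ hx hz => rw [mul_add]; exact add_mem hx hz
  | smul r x _ hx => rw [mul_smul_comm]; exact Submodule.smul_mem _ r hx

theorem ι_mul_mem_sup (hortho : Pairwise fun i j => Q.IsOrtho (e i) (e j))
    (hcover : ∀ i, ev i ∨ od i) (i : I) {y : CliffordAlgebra Q}
    (hy : y ∈ Subalgebra.toSubmodule (evenProducts Q e ev od) ⊔ oddProducts Q e ev od) :
    ι Q (e i) * y ∈ Subalgebra.toSubmodule (evenProducts Q e ev od) ⊔ oddProducts Q e ev od := by
  obtain ⟨p, hp, o, ho, rfl⟩ := Submodule.mem_sup.mp hy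
  rw [mul_add]
  refine add_mem ?_ (ι_mul_mem_sup_of_mem_oddProducts hortho hcover i ho)
  rcases hcover i with hi | hi
  · exact Submodule.mem_sup_left ((evenProducts Q e ev od).mul_mem (ι_mem_evenProducts hi) hp)
  · exact Submodule.mem_sup_right (ι_mul_mem_oddProducts hi hp)

theorem evenProducts_sup_oddProducts_eq_top (hspan : Submodule.span R (Set.range e) = ⊤)
    (hortho : Pairwise fun i j => Q.IsOrtho (e i) (e j)) (hcover : ∀ i, ev i ∨ od i) :
    Subalgebra.toSubmodule (evenProducts Q e ev od) ⊔ oddProducts Q e ev od = ⊤ := by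
  refine Submodule.eq_top_of_one_mem_of_mul_mem (adjoin_range_ι_comp_eq_top hspan)
    (Submodule.mem_sup_left (Subalgebra.one_mem _)) ?_
  rintro _ ⟨i, rfl⟩ y hy
  exact ι_mul_mem_sup hortho hcover i hy

end CliffordAlgebra

theorem even_part_generated_by_even_vectors_and_products_of_odd_vectors_general
    {V : Type*} [AddCommGroup V] [Module ℝ V]
    (B : LinearMap.BilinForm ℝ V)
    (A0 A1 : Submodule ℝ (CliffordAlgebra B.toQuadraticMap))
    (hsup : A0 ⊔ A1 = ⊤) (hdisj : A0 ⊓ A1 = ⊥)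
    (h00 : ∀ a ∈ A0, ∀ b ∈ A0, a * b ∈ A0)
    (h01 : ∀ a ∈ A0, ∀ b ∈ A1, a * b ∈ A1)
    (h10 : ∀ a ∈ A1, ∀ b ∈ A0, a * b ∈ A1)
    (h11 : ∀ a ∈ A1, ∀ b ∈ A1, a * b ∈ A0)
    {n : ℕ} (e : Module.Basis (Fin n) ℝ V)
    (horth : ∀ i j, i ≠ j → B (e i) (e j) = 0)
    (hadapted : ∀ i, ι B.toQuadraticMap (e i) ∈ A0 ∨ ι B.toQuadraticMap (e i) ∈ A1) :
    Subalgebra.toSubmodule (Algebra.adjoin ℝ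
      ({x | ∃ i, ι B.toQuadraticMap (e i) ∈ A0 ∧ x = ι B.toQuadraticMap (e i)} ∪
       {x | ∃ i j, ι B.toQuadraticMap (e i) ∈ A1 ∧ ι B.toQuadraticMap (e j) ∈ A1 ∧
          x = ι B.toQuadraticMap (e i) * ι B.toQuadraticMap (e j)})) = A0 := by
  have hdisjoint : Disjoint A0 A1 := disjoint_iff.mpr hdisj
  have hone :=
    Submodule.one_mem_of_mul_mem_of_sup_eq_top_of_disjoint hsup hdisjoint h00 h01 h10 h11
  have hortho : Pairwise fun i j => B.toQuadraticMap.IsOrtho (e i) (e j) := fun i j hij =>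
    QuadraticMap.isOrtho_polarBilin.mp <| by
      simp [LinearMap.BilinMap.polar_toQuadraticMap, horth i j hij, horth j i hij.symm]
  have htop := evenProducts_sup_oddProducts_eq_top (ev := fun i => ι B.toQuadraticMap (e i) ∈ A0)
    e.span_eq hortho hadapted
  have hP : Subalgebra.toSubmodule (evenProducts B.toQuadraticMap e _ _) ≤ A0 :=
    Algebra.adjoin_le (S := A0.toSubalgebra hone fun x y hx hy => h00 x hx y hy) <| by
      rintro _ (⟨i, hi, rfl⟩ | ⟨i, j, hi, hj, rfl⟩)
      exacts [hi, h11 _ hi _ hj]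
  have hO : oddProducts B.toQuadraticMap e _ _ ≤ A1 := Submodule.span_le.mpr <| by
    rintro _ ⟨i, hi, p, hp, rfl⟩
    exact h10 _ hi _ (hP hp)
  refine eq_of_le_of_inf_le_of_le_sup hP ?_ (htop ▸ le_top)
  exact (inf_le_inf_left A0 hO).trans (hdisj.trans_le bot_le)

/-- Let `{e₁,…,eₙ}` be a `g`-orthonormal basis of `V` adapted to the decomposition
`V = V₀ ⊕ V₁` induced by a Z₂-grading preserving the multivector structure.
Then the even part `Cℓ₀` is generated as an algebra by the vectors `eᵢ ∈ V₀`
together with the products `eᵢeⱼ` with `eᵢ, eⱼ ∈ V₁`. -/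
theorem even_part_generated_by_even_vectors_and_products_of_odd_vectors
    {V : Type*} [AddCommGroup V] [Module ℝ V] [FiniteDimensional ℝ V]
    (B : LinearMap.BilinForm ℝ V) (hsymm : B.IsSymm) (hnd : B.Nondegenerate)
    (A0 A1 : Submodule ℝ (CliffordAlgebra B.toQuadraticMap))
    (hsup : A0 ⊔ A1 = ⊤) (hdisj : A0 ⊓ A1 = ⊥)
    (h00 : ∀ a ∈ A0, ∀ b ∈ A0, a * b ∈ A0)
    (h01 : ∀ a ∈ A0, ∀ b ∈ A1, a * b ∈ A1)
    (h10 : ∀ a ∈ A1, ∀ b ∈ A0, a * b ∈ A1)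
    (h11 : ∀ a ∈ A1, ∀ b ∈ A1, a * b ∈ A0)
    (hpres : ∀ v : V, ∃ v0 v1 : V, ι B.toQuadraticMap v0 ∈ A0 ∧
      ι B.toQuadraticMap v1 ∈ A1 ∧ v = v0 + v1)
    {n : ℕ} (e : Module.Basis (Fin n) ℝ V)
    (horth : ∀ i j, i ≠ j → B (e i) (e j) = 0)
    (hnorm : ∀ i, B (e i) (e i) = 1 ∨ B (e i) (e i) = -1)
    (hadapted : ∀ i, ι B.toQuadraticMap (e i) ∈ A0 ∨ ι B.toQuadraticMap (e i) ∈ A1) :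
    Subalgebra.toSubmodule (Algebra.adjoin ℝ
      ({x | ∃ i, ι B.toQuadraticMap (e i) ∈ A0 ∧ x = ι B.toQuadraticMap (e i)} ∪
       {x | ∃ i j, ι B.toQuadraticMap (e i) ∈ A1 ∧ ι B.toQuadraticMap (e j) ∈ A1 ∧
          x = ι B.toQuadraticMap (e i) * ι B.toQuadraticMap (e j)})) = A0 :=
  even_part_generated_by_even_vectors_and_products_of_odd_vectors_general B A0 A1 hsup hdisj h00 h01
    h10 h11 e horth hadapted
end

section
/- With α = −id on V (the usual grading automorphism, the parity involution), the product a ∨_α b on Cℓ_{p,q} defined by extending v ∨_α a = v ∧ a − v ⌟ a satisfies a ∨_α b = b₀a₀ + b₀a₁ + b₁a₀ − b₁a₁ for all a, b, where aᵢ, bᵢ denote the even/odd parts with respect to the usual Z₂-grading; and (Λ(V), ∨_α) is isomorphic to Cℓ_{q,p} (the opposite-signature Clifford algebra). -/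
/-!
Write `a₀, a₁` for the even and odd parts of `a`. The product `a ∨ b = b₀ a + b₁ â` is
associative and unital, and `v ∨ a = â v`. Because `â v = v ∨ a`, any associative product that is
linear in its left argument and obeys this rule agrees with `∨` on every element obtained from `1`
by the moves `a ↦ â v`, and these span the algebra.

Since `v ∨ v = -v v = -Q v`, the map `ι` lifts to an algebra map `Cℓ(-Q) → (Cℓ(Q), ∨)`. It commutes
with `involute`, and tilting `∨` once more gives back the Clifford product, so composing the maps
for `Q` and for `-Q` gives the identity.
-/

namespace CliffordAlgebra

variable {R M : Type*} [CommRing R] [AddCommGroup M] [Module R M] {Q : QuadraticForm R M}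

variable (Q) in
/-- `CliffordAlgebra Q`, to be equipped with the product `tiltMul`. -/
def Tilted : Type _ := CliffordAlgebra Q

instance : AddCommGroup (Tilted Q) := inferInstanceAs (AddCommGroup (CliffordAlgebra Q))

instance : Module R (Tilted Q) := inferInstanceAs (Module R (CliffordAlgebra Q))

variable [Invertible (2 : R)]

def evenPart : CliffordAlgebra Q →ₗ[R] CliffordAlgebra Q :=
  (⅟2 : R) • (LinearMap.id + involute.toLinearMap)

def oddPart : CliffordAlgebra Q →ₗ[R] CliffordAlgebra Q :=
  (⅟2 : R) • (LinearMap.id - involute.toLinearMap)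

theorem evenPart_apply (a : CliffordAlgebra Q) : evenPart a = (⅟2 : R) • (a + involute a) := rfl

theorem oddPart_apply (a : CliffordAlgebra Q) : oddPart a = (⅟2 : R) • (a - involute a) := rfl

theorem evenPart_add_oddPart (a : CliffordAlgebra Q) : evenPart a + oddPart a = a := by
  rw [evenPart_apply, oddPart_apply, ← smul_add, add_add_sub_cancel, smul_add,
    invOf_two_smul_add_invOf_two_smul]

theorem evenPart_sub_oddPart (a : CliffordAlgebra Q) : evenPart a - oddPart a = involute a := by
  rw [evenPart_apply, oddPart_apply, ← smul_sub, add_sub_sub_cancel, smul_add,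
    invOf_two_smul_add_invOf_two_smul]

theorem involute_evenPart (a : CliffordAlgebra Q) : involute (evenPart a) = evenPart a := by
  rw [evenPart_apply, map_smul, map_add, involute_involute, add_comm]

theorem involute_oddPart (a : CliffordAlgebra Q) : involute (oddPart a) = -oddPart a := by
  rw [oddPart_apply, map_smul, map_sub, involute_involute, ← smul_neg, neg_sub]

theorem evenPart_add_of_involute {e o : CliffordAlgebra Q} (he : involute e = e)
    (ho : involute o = -o) : evenPart (e + o) = e := by
  rw [evenPart_apply, map_add, he, ho, add_add_add_comm, add_neg_cancel, add_zero,
    smul_add, invOf_two_smul_add_invOf_two_smul]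

theorem oddPart_add_of_involute {e o : CliffordAlgebra Q} (he : involute e = e)
    (ho : involute o = -o) : oddPart (e + o) = o := by
  rw [← add_right_inj (evenPart (e + o)), evenPart_add_oddPart, evenPart_add_of_involute he ho]

theorem evenPart_one : evenPart (1 : CliffordAlgebra Q) = 1 := by
  rw [evenPart_apply, map_one, smul_add, invOf_two_smul_add_invOf_two_smul]

theorem oddPart_one : oddPart (1 : CliffordAlgebra Q) = 0 := by
  rw [oddPart_apply, map_one, sub_self, smul_zero]

theorem evenPart_involute (a : CliffordAlgebra Q) : evenPart (involute a) = evenPart a := by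
  rw [evenPart_apply, evenPart_apply, involute_involute, add_comm]

theorem oddPart_involute (a : CliffordAlgebra Q) : oddPart (involute a) = -oddPart a := by
  rw [oddPart_apply, oddPart_apply, involute_involute, ← smul_neg, neg_sub]

/-- Lounesto's tilt product `a ∨ b = b₀ a + b₁ â`. -/
def tiltMul : CliffordAlgebra Q →ₗ[R] CliffordAlgebra Q →ₗ[R] CliffordAlgebra Q :=
  LinearMap.mk₂ R (fun a b => evenPart b * a + oddPart b * involute a)
    (fun a a' b => by simp only [map_add, mul_add]; abel)
    (fun r a b => by simp only [map_smul, mul_smul_comm, smul_add])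
    (fun a b b' => by simp only [map_add, add_mul]; abel)
    (fun r a b => by simp only [map_smul, smul_mul_assoc, smul_add])

theorem tiltMul_apply (a b : CliffordAlgebra Q) :
    tiltMul a b = evenPart b * a + oddPart b * involute a := rfl

theorem tiltMul_eq_parts (a b : CliffordAlgebra Q) :
    tiltMul a b = evenPart b * evenPart a + evenPart b * oddPart a + oddPart b * evenPart a -
      oddPart b * oddPart a := by
  rw [tiltMul_apply, ← evenPart_sub_oddPart a]
  conv_lhs => enter [1, 2]; rw [← evenPart_add_oddPart a]
  noncomm_ring

theorem evenPart_tiltMul (a b : CliffordAlgebra Q) :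
    evenPart (tiltMul a b) = evenPart b * evenPart a - oddPart b * oddPart a := by
  rw [tiltMul_eq_parts, add_sub_right_comm, add_sub_right_comm, add_assoc]
  exact evenPart_add_of_involute (by simp [involute_evenPart, involute_oddPart])
    (by simp only [map_add, map_mul, involute_evenPart, involute_oddPart]; noncomm_ring)

theorem oddPart_tiltMul (a b : CliffordAlgebra Q) :
    oddPart (tiltMul a b) = evenPart b * oddPart a + oddPart b * evenPart a := by
  rw [tiltMul_eq_parts, add_sub_right_comm, add_sub_right_comm, add_assoc]
  exact oddPart_add_of_involute (by simp [involute_evenPart, involute_oddPart])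
    (by simp only [map_add, map_mul, involute_evenPart, involute_oddPart]; noncomm_ring)

theorem tiltMul_assoc (a b c : CliffordAlgebra Q) :
    tiltMul (tiltMul a b) c = tiltMul a (tiltMul b c) := by
  rw [tiltMul_eq_parts (tiltMul a b), tiltMul_eq_parts a (tiltMul b c), evenPart_tiltMul,
    oddPart_tiltMul, evenPart_tiltMul, oddPart_tiltMul]
  noncomm_ring

theorem tiltMul_one_left (b : CliffordAlgebra Q) : tiltMul 1 b = b := by
  rw [tiltMul_apply, map_one, mul_one, mul_one, evenPart_add_oddPart]

theorem tiltMul_one_right (a : CliffordAlgebra Q) : tiltMul a 1 = a := by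
  rw [tiltMul_apply, evenPart_one, oddPart_one, one_mul, zero_mul, add_zero]

theorem tiltMul_ι_left (v : M) (a : CliffordAlgebra Q) :
    tiltMul (ι Q v) a = involute a * ι Q v := by
  rw [tiltMul_apply, involute_ι, ← evenPart_sub_oddPart, mul_neg, sub_mul, sub_eq_add_neg]

theorem involute_tiltMul (a b : CliffordAlgebra Q) :
    involute (tiltMul a b) = tiltMul (involute a) (involute b) := by
  rw [tiltMul_apply, tiltMul_apply, map_add, map_mul, map_mul, involute_evenPart,
    involute_oddPart, evenPart_involute, oddPart_involute, involute_involute]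

/-- Tilting the tilt product gives back the Clifford product. -/
theorem tiltMul_evenPart_add_tiltMul_oddPart (a b : CliffordAlgebra Q) :
    tiltMul (evenPart b) a + tiltMul (oddPart b) (involute a) = a * b := by
  rw [tiltMul_apply, tiltMul_apply, involute_evenPart, involute_oddPart, evenPart_involute,
    oddPart_involute]
  conv_rhs => rw [← evenPart_add_oddPart a, ← evenPart_add_oddPart b]
  noncomm_ring

theorem tiltMul_unique {P : CliffordAlgebra Q → CliffordAlgebra Q → CliffordAlgebra Q}
    (hlin : ∀ b, IsLinearMap R (fun a => P a b)) (hassoc : ∀ a b c, P (P a b) c = P a (P b c))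
    (hone : ∀ b, P 1 b = b) (hι : ∀ v a, P (ι Q v) a = involute a * ι Q v) :
    P = fun a b => tiltMul a b := by
  set S : Set (CliffordAlgebra Q) := {a | ∀ b, P a b = tiltMul a b}
  have one_mem : 1 ∈ S := fun b => by rw [hone, tiltMul_one_left]
  have add_mem : ∀ a a', a ∈ S → a' ∈ S → a + a' ∈ S := fun a a' ha ha' b => by
    rw [(hlin b).map_add, ha, ha', LinearMap.map_add₂]
  have smul_mem : ∀ (r : R) a, a ∈ S → r • a ∈ S := fun r a ha b => by
    rw [(hlin b).map_smul, ha, LinearMap.map_smul₂]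
  -- `â v = v ∨ a`, so membership propagates by associativity of both products.
  have involute_mul_ι_mem : ∀ a v, a ∈ S → involute a * ι Q v ∈ S := fun a v ha b =>
    calc P (involute a * ι Q v) b = P (P (ι Q v) a) b := by rw [hι]
      _ = P (ι Q v) (tiltMul a b) := by rw [hassoc, ha]
      _ = tiltMul (tiltMul (ι Q v) a) b := by rw [hι, tiltMul_assoc, tiltMul_ι_left]
      _ = tiltMul (involute a * ι Q v) b := by rw [tiltMul_ι_left]
  have mem : ∀ a, a ∈ S ∧ involute a ∈ S := by
    intro a
    induction a using right_induction with
    | algebraMap r =>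
      rw [AlgHom.commutes, Algebra.algebraMap_eq_smul_one]
      exact ⟨smul_mem r 1 one_mem, smul_mem r 1 one_mem⟩
    | add a a' ha ha' =>
      rw [map_add]
      exact ⟨add_mem a a' ha.1 ha'.1, add_mem _ _ ha.2 ha'.2⟩
    | mul_ι v a ha =>
      refine ⟨by simpa using involute_mul_ι_mem _ v ha.2, ?_⟩
      rw [map_mul, involute_ι, mul_neg, ← neg_one_smul R]
      exact smul_mem _ _ (involute_mul_ι_mem a v ha.1)
  funext a b
  exact (mem a).1 b

instance : Ring (Tilted Q) where
  mul a b := tiltMul (Q := Q) a b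
  one := (1 : CliffordAlgebra Q)
  mul_assoc := tiltMul_assoc
  one_mul := tiltMul_one_left
  mul_one := tiltMul_one_right
  left_distrib a := map_add (tiltMul (Q := Q) a)
  right_distrib a b c := LinearMap.map_add₂ tiltMul a b c
  zero_mul := LinearMap.map_zero₂ (tiltMul (Q := Q))
  mul_zero a := map_zero (tiltMul (Q := Q) a)

instance : Algebra R (Tilted Q) :=
  Algebra.ofModule (fun r a b => LinearMap.map_smul₂ tiltMul r a b)
    (fun r a b => map_smul (tiltMul (Q := Q) a) r b)

theorem Tilted.algebraMap_eq (r : R) :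
    algebraMap R (Tilted Q) r = (algebraMap R (CliffordAlgebra Q) r : CliffordAlgebra Q) :=
  (Algebra.algebraMap_eq_smul_one (A := CliffordAlgebra Q) r).symm

variable {Q' : QuadraticForm R M}

def toTilted (h : Q' = -Q) : CliffordAlgebra Q' →ₐ[R] Tilted Q :=
  lift Q' ⟨{ toFun := ι Q, map_add' := map_add (ι Q), map_smul' := map_smul (ι Q) }, fun v => by
    change tiltMul (ι Q v) (ι Q v) = algebraMap R (Tilted Q) (Q' v)
    rw [Tilted.algebraMap_eq, tiltMul_ι_left, involute_ι, neg_mul, ι_sq_scalar, h, neg_apply,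
      map_neg]⟩

/-- `toTilted` with values in `CliffordAlgebra Q`, where both products are available. -/
def tiltMap (h : Q' = -Q) : CliffordAlgebra Q' →ₗ[R] CliffordAlgebra Q where
  toFun := toTilted h
  map_add' := map_add (toTilted h)
  map_smul' := map_smul (toTilted h)

theorem tiltMap_ι (h : Q' = -Q) (v : M) : tiltMap h (ι Q' v) = ι Q v := by
  change toTilted h (ι Q' v) = _
  unfold toTilted
  rw [lift_ι_apply]
  rfl

theorem tiltMap_algebraMap (h : Q' = -Q) (r : R) :
    tiltMap h (algebraMap R _ r) = algebraMap R (CliffordAlgebra Q) r :=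
  ((toTilted h).commutes r).trans (Tilted.algebraMap_eq r)

theorem tiltMap_mul (h : Q' = -Q) (x y : CliffordAlgebra Q') :
    tiltMap h (x * y) = tiltMul (tiltMap h x) (tiltMap h y) :=
  map_mul (toTilted h) x y

theorem tiltMap_involute (h : Q' = -Q) (x : CliffordAlgebra Q') :
    tiltMap h (involute x) = involute (tiltMap h x) := by
  induction x using CliffordAlgebra.induction with
  | algebraMap r => simp only [AlgHom.commutes, tiltMap_algebraMap]
  | ι v => rw [involute_ι, map_neg, tiltMap_ι, involute_ι]
  | mul x y hx hy => rw [map_mul, tiltMap_mul, tiltMap_mul, hx, hy, involute_tiltMul]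
  | add x y hx hy => rw [map_add, map_add, map_add, hx, hy, map_add]

theorem tiltMap_evenPart (h : Q' = -Q) (x : CliffordAlgebra Q') :
    tiltMap h (evenPart x) = evenPart (tiltMap h x) := by
  rw [evenPart_apply, evenPart_apply, map_smul, map_add, tiltMap_involute]

theorem tiltMap_oddPart (h : Q' = -Q) (x : CliffordAlgebra Q') :
    tiltMap h (oddPart x) = oddPart (tiltMap h x) := by
  rw [oddPart_apply, oddPart_apply, map_smul, map_sub, tiltMap_involute]

theorem tiltMap_tiltMul (h : Q' = -Q) (x y : CliffordAlgebra Q') :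
    tiltMap h (tiltMul x y) = tiltMap h x * tiltMap h y := by
  rw [tiltMul_apply, map_add, tiltMap_mul, tiltMap_mul, tiltMap_involute, tiltMap_evenPart,
    tiltMap_oddPart, tiltMul_evenPart_add_tiltMul_oddPart]

theorem tiltMap_tiltMap (h : Q' = -Q) (h' : Q = -Q') (x : CliffordAlgebra Q') :
    tiltMap h' (tiltMap h x) = x := by
  induction x using CliffordAlgebra.induction with
  | algebraMap r => rw [tiltMap_algebraMap, tiltMap_algebraMap]
  | ι v => rw [tiltMap_ι, tiltMap_ι]
  | mul x y hx hy => rw [tiltMap_mul, tiltMap_tiltMul, hx, hy]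
  | add x y hx hy => rw [map_add, map_add, hx, hy]

noncomputable def tiltedEquiv (h : Q' = -Q) : CliffordAlgebra Q' ≃ₐ[R] Tilted Q :=
  AlgEquiv.ofBijective (toTilted h) <| Function.bijective_iff_has_inverse.mpr
    ⟨tiltMap (neg_eq_iff_eq_neg.mp h.symm), tiltMap_tiltMap h _, tiltMap_tiltMap _ h⟩

end CliffordAlgebra

open CliffordAlgebra

theorem tilt_product_formula_and_opposite_signature_general
    {V : Type*} [AddCommGroup V] [Module ℝ V]
    (B : LinearMap.BilinForm ℝ V)
    (P : CliffordAlgebra B.toQuadraticMap → CliffordAlgebra B.toQuadraticMap →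
      CliffordAlgebra B.toQuadraticMap)
    (hlin₂ : ∀ b, IsLinearMap ℝ (fun a => P a b))
    (hassoc : ∀ x y z, P (P x y) z = P x (P y z))
    (hone₁ : ∀ a, P 1 a = a)
    (hgen : ∀ (v : V) (a : CliffordAlgebra B.toQuadraticMap),
      P (ι B.toQuadraticMap v) a = involute a * ι B.toQuadraticMap v) :
    (∀ a b : CliffordAlgebra B.toQuadraticMap,
      P a b =
        ((1 / 2 : ℝ) • (b + involute b)) * ((1 / 2 : ℝ) • (a + involute a)) +
        ((1 / 2 : ℝ) • (b + involute b)) * ((1 / 2 : ℝ) • (a - involute a)) +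
        ((1 / 2 : ℝ) • (b - involute b)) * ((1 / 2 : ℝ) • (a + involute a)) -
        ((1 / 2 : ℝ) • (b - involute b)) * ((1 / 2 : ℝ) • (a - involute a))) ∧
    ∃ F : CliffordAlgebra (-B).toQuadraticMap ≃ₗ[ℝ] CliffordAlgebra B.toQuadraticMap,
      F 1 = 1 ∧ ∀ x y, F (x * y) = P (F x) (F y) := by
  obtain rfl := tiltMul_unique hlin₂ hassoc hone₁ hgen
  refine ⟨fun a b => ?_, (tiltedEquiv (LinearMap.BilinMap.toQuadraticMap_neg B)).toLinearEquiv,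
    map_one (tiltedEquiv _), map_mul (tiltedEquiv _)⟩
  simp only [one_div, ← invOf_eq_inv]
  exact tiltMul_eq_parts a b

/-- With `α = -id` on `V` (the usual grading automorphism, whose extension to
`Cℓ_{p,q}` is the parity involution `involute`), the tilt product `∨_α` —
the associative unital bilinear product generated by
`v ∨_α a = v ∧ a - v ⌟ a`, which on the Clifford algebra reads
`v ∨_α a = â v` — satisfies `a ∨_α b = b₀a₀ + b₀a₁ + b₁a₀ - b₁a₁` for all `a, b`
(`aᵢ, bᵢ` the even/odd parts for the usual grading); and `(Λ(V), ∨_α)` is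
isomorphic as a real algebra to the Clifford algebra of the opposite metric. -/
theorem tilt_product_formula_and_opposite_signature
    {V : Type*} [AddCommGroup V] [Module ℝ V] [FiniteDimensional ℝ V]
    (B : LinearMap.BilinForm ℝ V) (hsymm : B.IsSymm) (hnd : B.Nondegenerate)
    (P : CliffordAlgebra B.toQuadraticMap → CliffordAlgebra B.toQuadraticMap →
      CliffordAlgebra B.toQuadraticMap)
    (hlin₁ : ∀ a, IsLinearMap ℝ (P a))
    (hlin₂ : ∀ b, IsLinearMap ℝ (fun a => P a b))
    (hassoc : ∀ x y z, P (P x y) z = P x (P y z))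
    (hone₁ : ∀ a, P 1 a = a) (hone₂ : ∀ a, P a 1 = a)
    (hgen : ∀ (v : V) (a : CliffordAlgebra B.toQuadraticMap),
      P (ι B.toQuadraticMap v) a = involute a * ι B.toQuadraticMap v) :
    (∀ a b : CliffordAlgebra B.toQuadraticMap,
      P a b =
        ((1 / 2 : ℝ) • (b + involute b)) * ((1 / 2 : ℝ) • (a + involute a)) +
        ((1 / 2 : ℝ) • (b + involute b)) * ((1 / 2 : ℝ) • (a - involute a)) +
        ((1 / 2 : ℝ) • (b - involute b)) * ((1 / 2 : ℝ) • (a + involute a)) -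
        ((1 / 2 : ℝ) • (b - involute b)) * ((1 / 2 : ℝ) • (a - involute a))) ∧
    ∃ F : CliffordAlgebra (-B).toQuadraticMap ≃ₗ[ℝ] CliffordAlgebra B.toQuadraticMap,
      F 1 = 1 ∧ ∀ x y, F (x * y) = P (F x) (F y) :=
  tilt_product_formula_and_opposite_signature_general B P hlin₂ hassoc hone₁ hgen
end
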